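/- arXiv:1210.5902 — 3 statements merged into one kernel-verified Lean document; each statement's English description precedes it below -/
import Mathlib

section
/- The measure I_min violates left monotonicity: for the joint distribution on (X₁,X₂,S,S') assigning probability 1/6 to each of (0,0,0,0), (0,1,0,0), (0,1,0,1), (1,1,0,1) and probability 2/6 to (1,0,1,1), one has I_min(S:X₁;X₂) = 1/3 + (2/3)((3/4)log₂3 − 1) and I_min((S,S'):X₁;X₂) = 1/3, hence I_min(S:X₁;X₂) > I_min((S,S'):X₁;X₂). -/
/-! Given S = 0, each of X₁, X₂ carries specific information (3/4)·log₂3 − 1, which is positive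
because 2⁴ < 3³; given S = 1 each carries one bit. Refining S = 0 by S' into the classes (0,0)
and (0,1) makes X₂ independent of the indicator of the first class and X₁ of that of the second,
so on two thirds of the mass the minimum of the specific informations drops from a positive value
to 0, while the class (S,S') = (1,1) still contributes one bit from both predictors. -/

open scoped Classical
open Finset

/-- Probability that random variable `X` takes value `x` under `p`. -/
noncomputable def pr {Ω α : Type*} [Fintype Ω] [DecidableEq α]
    (p : Ω → ℝ) (X : Ω → α) (x : α) : ℝ :=
  ∑ ω, if X ω = x then p ω else 0

/-- Shannon mutual information (base 2). -/
noncomputable def mi {Ω α β : Type*} [Fintype Ω] [Fintype α] [Fintype β]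
    [DecidableEq α] [DecidableEq β]
    (p : Ω → ℝ) (X : Ω → α) (Y : Ω → β) : ℝ :=
  ∑ x, ∑ y,
    pr p (fun ω => (X ω, Y ω)) (x, y) *
      Real.logb 2 (pr p (fun ω => (X ω, Y ω)) (x, y) / (pr p X x * pr p Y y))

/-- The inner term of `I_min`: `∑_a p(a|s) log₂ (p(s|a)/p(s))`. -/
noncomputable def iminTerm {Ω σ α : Type*} [Fintype Ω] [Fintype σ] [Fintype α]
    [DecidableEq σ] [DecidableEq α]
    (p : Ω → ℝ) (S : Ω → σ) (A : Ω → α) (s : σ) : ℝ :=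
  ∑ a, (pr p (fun ω => (S ω, A ω)) (s, a) / pr p S s) *
      Real.logb 2 ((pr p (fun ω => (S ω, A ω)) (s, a) / pr p A a) / pr p S s)

/-- `I_min` for two predictor variables. -/
noncomputable def imin2 {Ω σ α β : Type*} [Fintype Ω] [Fintype σ] [Fintype α] [Fintype β]
    [DecidableEq σ] [DecidableEq α] [DecidableEq β]
    (p : Ω → ℝ) (T : Ω → σ) (A : Ω → α) (B : Ω → β) : ℝ :=
  ∑ s, pr p T s * min (iminTerm p T A s) (iminTerm p T B s)

open Real

lemma div_lt_logb_of_pow_lt {b x : ℝ} {m n : ℕ} (hb : 1 < b) (hn : 0 < n)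
    (h : b ^ m < x ^ n) : (m : ℝ) / n < logb b x := by
  have hlt : logb b (b ^ m) < logb b (x ^ n) := logb_lt_logb hb (by positivity) h
  rw [logb_pow, logb_pow, logb_self_eq_one hb, mul_one] at hlt
  rw [div_lt_iff₀ (by exact_mod_cast hn)]
  linarith

namespace IminLeftMonotonicity

noncomputable def p : Fin 5 → ℝ := ![1/6, 1/6, 1/6, 1/6, 2/6]
def x₁ : Fin 5 → Bool := ![false, false, false, true, true]
def x₂ : Fin 5 → Bool := ![false, true, true, true, false]
def s : Fin 5 → Bool := ![false, false, false, false, true]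
def s' : Fin 5 → Bool := ![false, false, true, true, true]

lemma logb_two_half : logb 2 (1 / 2) = -1 := by
  rw [one_div, logb_inv, logb_self_eq_one one_lt_two]

lemma logb_two_three_halves : logb 2 (3 / 2) = logb 2 3 - 1 := by
  rw [logb_div (by norm_num) (by norm_num), logb_self_eq_one one_lt_two]

lemma pr_s : pr p s true = 1/3 ∧ pr p s false = 2/3 := by
  simp only [pr, p, s, Fin.sum_univ_five, Matrix.cons_val]
  norm_num

-- `(S,S') = (1,0)` has probability 0, so the junk value of its `iminTerm` never matters.
lemma pr_ss' :
    pr p (fun ω => (s ω, s' ω)) (false, false) = 1/3 ∧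
    pr p (fun ω => (s ω, s' ω)) (false, true) = 1/3 ∧
    pr p (fun ω => (s ω, s' ω)) (true, false) = 0 ∧
    pr p (fun ω => (s ω, s' ω)) (true, true) = 1/3 := by
  simp only [pr, p, s, s', Fin.sum_univ_five, Matrix.cons_val]
  norm_num

lemma iminTerm_s_x₁ :
    iminTerm p s x₁ true = 1 ∧ iminTerm p s x₁ false = 3/4 * logb 2 3 - 1 := by
  simp only [iminTerm, pr, p, s, x₁, Fin.sum_univ_five, Fintype.sum_bool, Matrix.cons_val]
  norm_num
  rw [logb_two_half, logb_two_three_halves]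
  ring

lemma iminTerm_s_x₂ :
    iminTerm p s x₂ true = 1 ∧ iminTerm p s x₂ false = 3/4 * logb 2 3 - 1 := by
  simp only [iminTerm, pr, p, s, x₂, Fin.sum_univ_five, Fintype.sum_bool, Matrix.cons_val]
  norm_num
  rw [logb_two_half, logb_two_three_halves]
  ring

lemma iminTerm_ss'_x₁ :
    iminTerm p (fun ω => (s ω, s' ω)) x₁ (false, false) = 1 ∧
    iminTerm p (fun ω => (s ω, s' ω)) x₁ (false, true) = 0 ∧
    iminTerm p (fun ω => (s ω, s' ω)) x₁ (true, true) = 1 := by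
  simp only [iminTerm, pr, p, s, s', x₁, Fin.sum_univ_five, Fintype.sum_bool, Matrix.cons_val]
  norm_num

lemma iminTerm_ss'_x₂ :
    iminTerm p (fun ω => (s ω, s' ω)) x₂ (false, false) = 0 ∧
    iminTerm p (fun ω => (s ω, s' ω)) x₂ (false, true) = 1 ∧
    iminTerm p (fun ω => (s ω, s' ω)) x₂ (true, true) = 1 := by
  simp only [iminTerm, pr, p, s, s', x₂, Fin.sum_univ_five, Fintype.sum_bool, Matrix.cons_val]
  norm_num

lemma imin2_s : imin2 p s x₁ x₂ = 1/3 + 2/3 * (3/4 * logb 2 3 - 1) := by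
  obtain ⟨hx₁t, hx₁f⟩ := iminTerm_s_x₁
  obtain ⟨hx₂t, hx₂f⟩ := iminTerm_s_x₂
  simp only [imin2, Fintype.sum_bool, pr_s.1, pr_s.2, hx₁t, hx₁f, hx₂t, hx₂f, min_self]
  ring

lemma imin2_ss' : imin2 p (fun ω => (s ω, s' ω)) x₁ x₂ = 1/3 := by
  obtain ⟨hff, hft, htf, htt⟩ := pr_ss'
  obtain ⟨hx₁ff, hx₁ft, hx₁tt⟩ := iminTerm_ss'_x₁
  obtain ⟨hx₂ff, hx₂ft, hx₂tt⟩ := iminTerm_ss'_x₂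
  simp only [imin2, Fintype.sum_prod_type, Fintype.sum_bool, hff, hft, htf, htt,
    hx₁ff, hx₁ft, hx₁tt, hx₂ff, hx₂ft, hx₂tt]
  norm_num

end IminLeftMonotonicity

/-- `I_min` violates left monotonicity: for the given five-point distribution,
`I_min(S:X₁;X₂) = 1/3 + (2/3)((3/4)log₂3 − 1) > 1/3 = I_min((S,S'):X₁;X₂)`. -/
theorem imin_violates_left_monotonicity
    (p : Fin 5 → ℝ) (hp : p = ![1/6, 1/6, 1/6, 1/6, 2/6])
    (X₁ X₂ S S' : Fin 5 → Bool)
    (hX₁ : X₁ = ![false, false, false, true, true])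
    (hX₂ : X₂ = ![false, true, true, true, false])
    (hS : S = ![false, false, false, false, true])
    (hS' : S' = ![false, false, true, true, true]) :
    imin2 p S X₁ X₂ = 1/3 + (2/3) * ((3/4) * Real.logb 2 3 - 1) ∧
    imin2 p (fun ω => (S ω, S' ω)) X₁ X₂ = 1/3 ∧
    imin2 p (fun ω => (S ω, S' ω)) X₁ X₂ < imin2 p S X₁ X₂ := by
  obtain rfl : p = IminLeftMonotonicity.p := hp
  obtain rfl : X₁ = IminLeftMonotonicity.x₁ := hX₁
  obtain rfl : X₂ = IminLeftMonotonicity.x₂ := hX₂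
  obtain rfl : S = IminLeftMonotonicity.s := hS
  obtain rfl : S' = IminLeftMonotonicity.s' := hS'
  refine ⟨IminLeftMonotonicity.imin2_s, IminLeftMonotonicity.imin2_ss', ?_⟩
  have hlogb : (4 : ℝ) / 3 < logb 2 3 := by
    exact_mod_cast div_lt_logb_of_pow_lt (m := 4) (n := 3) one_lt_two (by norm_num)
      (by norm_num : (2 : ℝ) ^ 4 < 3 ^ 3)
  rw [IminLeftMonotonicity.imin2_s, IminLeftMonotonicity.imin2_ss']
  linarith
end

section
/- If SI(S:X₁;X₂) is any measure of shared information such that the induced synergy CI(S:X₁;X₂) := I(S:X₁|X₂) − I(S:X₁) + SI(S:X₁;X₂) is nonnegative, and SI satisfies SI(S:X₁;X₂) ≤ I(S:X₁), then whenever S is a deterministic function of X₂ one has SI(S:X₁;X₂) = I(S:X₁). -/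
open scoped Classical
open Finset

/-- The conditional distribution of `p` given `Z = z`. -/
noncomputable def condDist {Ω γ : Type*} [Fintype Ω] [DecidableEq γ]
    (p : Ω → ℝ) (Z : Ω → γ) (z : γ) : Ω → ℝ :=
  fun ω => if Z ω = z then p ω / pr p Z z else 0

/-- Conditional mutual information `I(X : Y | Z)` (base 2). -/
noncomputable def cmi {Ω α β γ : Type*} [Fintype Ω] [Fintype α] [Fintype β] [Fintype γ]
    [DecidableEq α] [DecidableEq β] [DecidableEq γ]
    (p : Ω → ℝ) (X : Ω → α) (Y : Ω → β) (Z : Ω → γ) : ℝ :=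
  ∑ z, pr p Z z * mi (condDist p Z z) X Y

/-!
Conditioned on `X₂ = z`, the variable `S = f ∘ X₂` is the constant `f z` on the support of the
conditional distribution, and a constant shares no information with anything; hence
`I(S:X₁|X₂) = 0`. Nonnegativity of the synergy then reads `SI ≥ I(S:X₁)`, the reverse of the
assumed bound.
-/

section Support

variable {Ω : Type*} [Fintype Ω]

theorem pr_congr_of_eq_on_support {α : Type*} [DecidableEq α] (q : Ω → ℝ) {X Y : Ω → α}
    (hXY : ∀ ω, q ω ≠ 0 → X ω = Y ω) : pr q X = pr q Y := by
  funext x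
  refine Finset.sum_congr rfl fun ω _ => ?_
  by_cases hq : q ω = 0
  · simp [hq]
  · rw [hXY ω hq]

theorem mi_congr_of_eq_on_support_left {α β : Type*} [Fintype α] [Fintype β]
    [DecidableEq α] [DecidableEq β] (q : Ω → ℝ) {X X' : Ω → α} (Y : Ω → β)
    (hXX' : ∀ ω, q ω ≠ 0 → X ω = X' ω) : mi q X Y = mi q X' Y := by
  have hpair : pr q (fun ω => (X ω, Y ω)) = pr q (fun ω => (X' ω, Y ω)) :=
    pr_congr_of_eq_on_support q fun ω hω => by rw [hXX' ω hω]
  unfold mi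
  rw [hpair, pr_congr_of_eq_on_support q hXX']

theorem pr_const {α : Type*} [DecidableEq α] (q : Ω → ℝ) (c x : α) :
    pr q (fun _ => c) x = if c = x then ∑ ω, q ω else 0 := by
  unfold pr
  split_ifs <;> simp [*]

theorem pr_const_pair {α β : Type*} [DecidableEq α] [DecidableEq β] (q : Ω → ℝ)
    (c : α) (Y : Ω → β) (a : α) (y : β) :
    pr q (fun ω => (c, Y ω)) (a, y) = if c = a then pr q Y y else 0 := by
  unfold pr
  split_ifs <;> simp [*]

theorem mi_const_left {α β : Type*} [Fintype α] [Fintype β] [DecidableEq α] [DecidableEq β]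
    (q : Ω → ℝ) (hq : ∑ ω, q ω = 1) (c : α) (Y : Ω → β) : mi q (fun _ => c) Y = 0 := by
  unfold mi
  refine Finset.sum_eq_zero fun a _ => Finset.sum_eq_zero fun y _ => ?_
  rw [pr_const_pair, pr_const, hq]
  split_ifs
  · by_cases hy : pr q Y y = 0 <;> simp [hy]
  · simp

theorem mi_eq_zero_of_const_on_support {α β : Type*} [Fintype α] [Fintype β]
    [DecidableEq α] [DecidableEq β] (q : Ω → ℝ) (hq : ∑ ω, q ω = 1) (X : Ω → α) (Y : Ω → β)
    (c : α) (hX : ∀ ω, q ω ≠ 0 → X ω = c) : mi q X Y = 0 := by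
  rw [mi_congr_of_eq_on_support_left q Y hX, mi_const_left q hq]

end Support

section Conditioning

variable {Ω γ : Type*} [Fintype Ω] [DecidableEq γ]

theorem sum_condDist (p : Ω → ℝ) (Z : Ω → γ) {z : γ} (hz : pr p Z z ≠ 0) :
    ∑ ω, condDist p Z z ω = 1 := by
  unfold condDist
  rw [← div_self hz, pr, Finset.sum_div]
  exact Finset.sum_congr rfl fun ω _ => by split_ifs <;> simp

theorem eq_of_condDist_ne_zero (p : Ω → ℝ) (Z : Ω → γ) {z : γ} {ω : Ω}
    (hω : condDist p Z z ω ≠ 0) : Z ω = z := by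
  by_contra hZ
  exact hω (if_neg hZ)

theorem cmi_eq_zero_of_eq_comp {σ α : Type*} [Fintype σ] [Fintype α] [Fintype γ]
    [DecidableEq σ] [DecidableEq α] (p : Ω → ℝ) (S : Ω → σ) (X : Ω → α) (Z : Ω → γ)
    (f : γ → σ) (hf : ∀ ω, S ω = f (Z ω)) : cmi p S X Z = 0 := by
  refine Finset.sum_eq_zero fun z _ => ?_
  by_cases hz : pr p Z z = 0
  · rw [hz, zero_mul]
  · rw [mi_eq_zero_of_const_on_support _ (sum_condDist p Z hz) S X (f z)
      fun ω hω => by rw [hf ω, eq_of_condDist_ne_zero p Z hω], mul_zero]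

end Conditioning

theorem SI_eq_mi_of_function_general {Ω σ α β : Type*} [Fintype Ω] [Fintype σ]
    [Fintype α] [Fintype β] [DecidableEq σ] [DecidableEq α] [DecidableEq β]
    (p : Ω → ℝ)
    (S : Ω → σ) (X₁ : Ω → α) (X₂ : Ω → β)
    (SI CI : ℝ)
    (hCIdef : CI = cmi p S X₁ X₂ - mi p S X₁ + SI)
    (hCI : 0 ≤ CI)
    (hSIle : SI ≤ mi p S X₁)
    (hfun : ∃ f : β → σ, ∀ ω, S ω = f (X₂ ω)) :
    SI = mi p S X₁ := by
  obtain ⟨f, hf⟩ := hfun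
  have hcmi : cmi p S X₁ X₂ = 0 := cmi_eq_zero_of_eq_comp p S X₁ X₂ f hf
  linarith

/-- If `SI` is a measure of shared information whose induced synergy
`CI = I(S:X₁|X₂) − I(S:X₁) + SI` is nonnegative, and `SI ≤ I(S:X₁)`, then
whenever `S` is a deterministic function of `X₂`, `SI = I(S:X₁)`. -/
theorem SI_eq_mi_of_function {Ω σ α β : Type*} [Fintype Ω] [Fintype σ]
    [Fintype α] [Fintype β] [DecidableEq σ] [DecidableEq α] [DecidableEq β]
    (p : Ω → ℝ) (hp0 : ∀ ω, 0 ≤ p ω) (hp1 : ∑ ω, p ω = 1)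
    (S : Ω → σ) (X₁ : Ω → α) (X₂ : Ω → β)
    (SI CI : ℝ)
    (hCIdef : CI = cmi p S X₁ X₂ - mi p S X₁ + SI)
    (hCI : 0 ≤ CI)
    (hSIle : SI ≤ mi p S X₁)
    (hfun : ∃ f : β → σ, ∀ ω, S ω = f (X₂ ω)) :
    SI = mi p S X₁ :=
  SI_eq_mi_of_function_general p S X₁ X₂ SI CI hCIdef hCI hSIle hfun
end

section
/- For the joint distribution p(s,x₁,x₂) with binary variables given by p(0,0,0)=2/6, p(0,1,0)=1/6, p(1,0,1)=1/6, p(1,1,1)=2/6 (so S = X₂ and I(S:X₁|X₂)=0), the measure SI_KL(S:X₁;X₂) := Σ_{x₁,x₂} p(x₁,x₂) D(p_{x₁∧x₂} ‖ p(S)) satisfies SI_KL(S:X₁;X₂) < I(S:X₁), where p_{x₁∧x₂} is the KL-minimizing point in the convex hull of p(S|x₁) and p(S|x₂). Hence SI_KL violates the identity SI(S:X₁;X₂)=I(S:X₁) required when S is a function of X₂. -/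
/-!
Here `S = X₂` and `p(S) = (1/2, 1/2)`. For `x₁ ≠ x₂` the prior is `3/4 · p(S|x₁) + 1/4 · p(S|x₂)`,
so it is its own KL projection onto the hull and those terms of `SI_KL` vanish. For `x₁ = x₂` the
projection is no farther from the prior than `p(S|x₁)`, and `D(p(S|x₁) ‖ p(S)) = I(S:X₁) =
log₂(32/27)/3 > 0`. These diagonal outcomes carry total weight `2/3`, so
`SI_KL ≤ (2/3) I(S:X₁) < I(S:X₁)`.
-/

open scoped Classical
open Finset

noncomputable def KL {S : Type*} [Fintype S] (q p : S → ℝ) : ℝ :=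
  ∑ s, q s * Real.logb 2 (q s / p s)

lemma KL_self {S : Type*} [Fintype S] (q : S → ℝ) : KL q q = 0 := by
  refine Finset.sum_eq_zero fun s _ => ?_
  rcases eq_or_ne (q s) 0 with h | h <;> simp [h]

def IsKLProjection {S : Type*} [Fintype S] (q prior : S → ℝ) (C : Set (S → ℝ)) : Prop :=
  q ∈ C ∧ ∀ r ∈ C, KL q prior ≤ KL r prior

lemma IsKLProjection.KL_le_zero {S : Type*} [Fintype S] {q prior : S → ℝ}
    {C : Set (S → ℝ)} (hq : IsKLProjection q prior C) (hprior : prior ∈ C) :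
    KL q prior ≤ 0 :=
  KL_self prior ▸ hq.2 prior hprior

/-- The paper's `p(s, x₁, x₂)`, which vanishes unless `s = x₂`, as a function of `(x₁, x₂)`. -/
noncomputable def exampleDist (ω : Bool × Bool) : ℝ := if ω.1 = ω.2 then 1/3 else 1/6

lemma exampleDist_eq_of_values {p : Bool × Bool → ℝ}
    (hp : p (false, false) = 2/6 ∧ p (true, false) = 1/6 ∧
          p (false, true) = 1/6 ∧ p (true, true) = 2/6) :
    p = exampleDist := by
  obtain ⟨h₀₀, h₁₀, h₀₁, h₁₁⟩ := hp
  funext ⟨a, b⟩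
  cases a <;> cases b <;> norm_num [exampleDist, *]

lemma pr_exampleDist_fst (x : Bool) : pr exampleDist Prod.fst x = 1/2 := by
  cases x <;> norm_num [pr, exampleDist, Fintype.sum_prod_type]

lemma pr_exampleDist_snd (x : Bool) : pr exampleDist Prod.snd x = 1/2 := by
  cases x <;> norm_num [pr, exampleDist, Fintype.sum_prod_type]

lemma pr_prodMk_fst_snd {α β : Type*} [Fintype α] [Fintype β] [DecidableEq α] [DecidableEq β]
    (p : α × β → ℝ) (ω : α × β) :
    pr p (fun ω => (ω.1, ω.2)) ω = p ω := by
  simp [pr]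

lemma posterior_fst_exampleDist (x s : Bool) :
    pr exampleDist (fun ω => (ω.2, ω.1)) (s, x) / pr exampleDist Prod.fst x =
      if s = x then 2/3 else 1/3 := by
  cases x <;> cases s <;> norm_num [pr, exampleDist, Fintype.sum_prod_type]

lemma posterior_snd_exampleDist (x s : Bool) :
    pr exampleDist (fun ω => (ω.2, ω.2)) (s, x) / pr exampleDist Prod.snd x =
      if s = x then 1 else 0 := by
  cases x <;> cases s <;> norm_num [pr, exampleDist, Fintype.sum_prod_type]

lemma two_thirds_logb_add_one_third_logb :
    2/3 * Real.logb 2 (4/3) + 1/3 * Real.logb 2 (2/3) = Real.logb 2 (32/27) / 3 := by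
  rw [show (32 : ℝ)/27 = 4/3 * (4/3) * (2/3) by norm_num,
    Real.logb_mul (by norm_num) (by norm_num), Real.logb_mul (by norm_num) (by norm_num)]
  ring

lemma KL_posterior_fst_exampleDist (x : Bool) :
    KL (fun s => if s = x then (2/3 : ℝ) else 1/3) (fun _ => 1/2) = Real.logb 2 (32/27) / 3 := by
  rw [← two_thirds_logb_add_one_third_logb]
  cases x <;> norm_num [KL, Fintype.sum_bool, add_comm]

lemma mi_exampleDist : mi exampleDist Prod.snd Prod.fst = Real.logb 2 (32/27) / 3 := by
  rw [← two_thirds_logb_add_one_third_logb]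
  norm_num [mi, pr, exampleDist, Fintype.sum_prod_type, Fintype.sum_bool]
  ring

lemma half_mem_convexHull_posteriors {x₁ x₂ : Bool} (h : x₁ ≠ x₂) :
    (fun _ => 1/2 : Bool → ℝ) ∈ convexHull ℝ
      {fun s => if s = x₁ then 2/3 else 1/3, fun s => if s = x₂ then 1 else 0} := by
  obtain rfl : x₂ = !x₁ := Bool.eq_not_iff.mpr h.symm
  rw [convexHull_pair]
  refine ⟨3/4, 1/4, by norm_num, by norm_num, by norm_num, funext fun s => ?_⟩
  cases x₁ <;> cases s <;> norm_num

/-- For the distribution `p(0,0,0)=2/6, p(0,1,0)=1/6, p(1,0,1)=1/6, p(1,1,1)=2/6`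
on `(s,x₁,x₂)` with `S = X₂`, the measure
`SI_KL(S:X₁;X₂) = Σ p(x₁,x₂) D(p_{x₁∧x₂}‖p(S))` is strictly smaller than
`I(S:X₁)`, where `p_{x₁∧x₂}` minimizes `D(·‖p(S))` over `conv{p(S|x₁),p(S|x₂)}`.
Hence `SI_KL` violates `SI(S:X₁;X₂) = I(S:X₁)` when `S` is a function of `X₂`. -/
theorem SIKL_violates_identity_when_S_function_of_X₂
    (p : Bool × Bool → ℝ)
    (hp : p (false, false) = 2/6 ∧ p (true, false) = 1/6 ∧
          p (false, true) = 1/6 ∧ p (true, true) = 2/6)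
    (X₁ X₂ S : Bool × Bool → Bool)
    (hX₁ : ∀ ω, X₁ ω = ω.1) (hX₂ : ∀ ω, X₂ ω = ω.2) (hS : ∀ ω, S ω = ω.2)
    (prior : Bool → ℝ) (hprior : ∀ s, prior s = pr p S s)
    (post₁ post₂ : Bool → Bool → ℝ)
    (hpost₁ : ∀ x₁ s, post₁ x₁ s = pr p (fun ω => (S ω, X₁ ω)) (s, x₁) / pr p X₁ x₁)
    (hpost₂ : ∀ x₂ s, post₂ x₂ s = pr p (fun ω => (S ω, X₂ ω)) (s, x₂) / pr p X₂ x₂)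
    (pand : Bool → Bool → (Bool → ℝ))
    (hpand : ∀ x₁ x₂, pand x₁ x₂ ∈ convexHull ℝ {post₁ x₁, post₂ x₂} ∧
      ∀ r ∈ convexHull ℝ ({post₁ x₁, post₂ x₂} : Set (Bool → ℝ)),
        KL (pand x₁ x₂) prior ≤ KL r prior) :
    (∑ x₁, ∑ x₂, pr p (fun ω => (X₁ ω, X₂ ω)) (x₁, x₂) * KL (pand x₁ x₂) prior)
      < mi p S X₁ := by
  obtain rfl := exampleDist_eq_of_values hp
  obtain rfl : X₁ = Prod.fst := funext hX₁
  obtain rfl : X₂ = Prod.snd := funext hX₂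
  obtain rfl : S = Prod.snd := funext hS
  have hprior' : prior = fun _ => 1/2 :=
    funext fun s => (hprior s).trans (pr_exampleDist_snd s)
  obtain rfl : post₁ = fun x s => if s = x then 2/3 else 1/3 :=
    funext₂ fun x s => (hpost₁ x s).trans (posterior_fst_exampleDist x s)
  obtain rfl : post₂ = fun x s => if s = x then 1 else 0 :=
    funext₂ fun x s => (hpost₂ x s).trans (posterior_snd_exampleDist x s)
  have hdiag (x : Bool) : KL (pand x x) prior ≤ Real.logb 2 (32/27) / 3 :=
    ((hpand x x).2 _ (subset_convexHull ℝ _ (.inl rfl))).trans_eq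
      (hprior' ▸ KL_posterior_fst_exampleDist x)
  have hoff {x₁ x₂ : Bool} (h : x₁ ≠ x₂) : KL (pand x₁ x₂) prior ≤ 0 :=
    IsKLProjection.KL_le_zero (hpand x₁ x₂) (hprior' ▸ half_mem_convexHull_posteriors h)
  have hpos : 0 < Real.logb 2 (32/27) := Real.logb_pos (by norm_num) (by norm_num)
  simp only [Fintype.sum_bool, pr_prodMk_fst_snd, mi_exampleDist]
  norm_num [exampleDist]
  linarith [hdiag true, hdiag false, hoff (by decide : true ≠ false),
    hoff (by decide : false ≠ true)]
end
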